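/- For every δ > 0 and ε > 0 there exists a (δ,ε)-successful forecasting strategy; moreover it can be chosen so that, setting n := ⌈4/(δε²)⌉, every forecast it makes satisfies t + N ≤ 2^n (it only ever forecasts about intervals contained in the first 2^n bits of the sequence). -/

import Mathlib

open scoped Classical

/-- A forecasting strategy: for each sequence `x` (0-indexed: `x i` is bit `x_{i+1}`),
a probability distribution on triples `(t, p, N)`, meaning "after seeing the first `t`
bits, forecast that a `p` fraction of the next `N` bits will be 1s".  The support
consists of triples with `p ∈ ℚ ∩ [0,1]` and `N ≥ 1`, and the probability of a forecast
made at time `t` depends only on the first `t` bits of `x`. -/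
structure ForecastStrategy where
  prob : (ℕ → Bool) → ℕ × ℚ × ℕ → ℝ
  nonneg : ∀ x f, 0 ≤ prob x f
  total : ∀ x, ∑' f : ℕ × ℚ × ℕ, prob x f = 1
  valid : ∀ x (t : ℕ) (p : ℚ) (N : ℕ), prob x (t, p, N) ≠ 0 → 0 ≤ p ∧ p ≤ 1 ∧ 1 ≤ N
  adapted : ∀ x x' : ℕ → Bool, ∀ (t : ℕ) (p : ℚ) (N : ℕ),
    (∀ j, j < t → x j = x' j) → prob x (t, p, N) = prob x' (t, p, N)

/-- The fraction of 1s among `x_{t+1}, …, x_{t+N}` (0-indexed: indices `t, …, t+N-1`). -/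
noncomputable def onesFrac (x : ℕ → Bool) (t N : ℕ) : ℝ :=
  (((Finset.Ico t (t + N)).filter (fun j => x j = true)).card : ℝ) / N

/-- A forecast `(t, p, N)` is `ε`-successful on `x` if the fraction of 1s among
`x_{t+1}, …, x_{t+N}` lies in the open interval `(p - ε, p + ε)`. -/
def epsSuccessful (ε : ℝ) (x : ℕ → Bool) (f : ℕ × ℚ × ℕ) : Prop :=
  (f.2.1 : ℝ) - ε < onesFrac x f.1 f.2.2 ∧ onesFrac x f.1 f.2.2 < (f.2.1 : ℝ) + ε

/-- A forecasting strategy is `(δ, ε)`-successful if on every sequence `x`, the total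
probability of making an `ε`-successful forecast is at least `1 - δ`. -/
def successfulStrategy (δ ε : ℝ) (S : ForecastStrategy) : Prop :=
  ∀ x : ℕ → Bool,
    1 - δ ≤ ∑' f : ℕ × ℚ × ℕ, if epsSuccessful ε x f then S.prob x f else 0

/-!
The strategy picks one of the `n` levels of the dyadic decomposition of `[0, 2^n)` uniformly, then a
block of that level uniformly, and after seeing the first half of the block predicts that the
second half has the same frequency of ones. Such a forecast fails only if the two frequencies
differ by at least `ε`, i.e. only if the squared Haar coefficient of the block is at least
`ε² 2^(m+1) / 4`, where `2^(m+1)` is the block length. By Parseval's identity for the Haar basis,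
the squared Haar coefficients of a `0/1` sequence on `[0, 2^n)` sum to at most `2^n / 4`, so the
probability of failure is at most `1 / (ε² n) ≤ δ`.
-/

noncomputable section

section DyadicSum

variable {M : Type*}

/-- `dyadicSum g n a` is the sum of `g b m` over the blocks `[b, b + 2^(m+1))` of length at least
2 of the dyadic decomposition of `[a, a + 2^n)`. -/
def dyadicSum [AddCommMonoid M] (g : ℕ → ℕ → M) : ℕ → ℕ → M
  | 0, _ => 0
  | n + 1, a => g a n + dyadicSum g n a + dyadicSum g n (a + 2 ^ n)

theorem dyadicSum_mul_left {R : Type*} [NonUnitalNonAssocSemiring R] (c : R) (g : ℕ → ℕ → R)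
    (n a : ℕ) : dyadicSum (fun b m => c * g b m) n a = c * dyadicSum g n a := by
  induction n generalizing a with
  | zero => simp [dyadicSum]
  | succ n ih => simp only [dyadicSum, ih, mul_add]

theorem dyadicSum_sub [AddCommGroup M] (g h : ℕ → ℕ → M) (n a : ℕ) :
    dyadicSum (fun b m => g b m - h b m) n a = dyadicSum g n a - dyadicSum h n a := by
  induction n generalizing a with
  | zero => simp [dyadicSum]
  | succ n ih => simp only [dyadicSum, ih]; abel

theorem dyadicSum_mono [AddCommMonoid M] [PartialOrder M] [IsOrderedAddMonoid M]
    {g h : ℕ → ℕ → M} (hgh : ∀ b m, g b m ≤ h b m) (n a : ℕ) :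
    dyadicSum g n a ≤ dyadicSum h n a := by
  induction n generalizing a with
  | zero => exact le_rfl
  | succ n ih => exact add_le_add (add_le_add (hgh a n) (ih a)) (ih _)

theorem dyadicSum_nonneg [AddCommMonoid M] [PartialOrder M] [IsOrderedAddMonoid M]
    {g : ℕ → ℕ → M} (hg : ∀ b m, 0 ≤ g b m) (n a : ℕ) : 0 ≤ dyadicSum g n a := by
  induction n generalizing a with
  | zero => exact le_rfl
  | succ n ih => exact add_nonneg (add_nonneg (hg a n) (ih a)) (ih _)

theorem hasSum_dyadicSum {ι : Type*} [AddCommMonoid M] [TopologicalSpace M] [ContinuousAdd M]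
    {G : ι → ℕ → ℕ → M} {g : ℕ → ℕ → M} (hG : ∀ b m, HasSum (fun i => G i b m) (g b m))
    (n a : ℕ) : HasSum (fun i => dyadicSum (G i) n a) (dyadicSum g n a) := by
  induction n generalizing a with
  | zero => exact hasSum_zero
  | succ n ih => exact ((hG a n).add (ih a)).add (ih _)

theorem exists_ne_zero_of_dyadicSum_ne_zero [AddCommMonoid M] {g : ℕ → ℕ → M} {n a : ℕ}
    (h : dyadicSum g n a ≠ 0) : ∃ b m, b + 2 ^ (m + 1) ≤ a + 2 ^ n ∧ g b m ≠ 0 := by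
  induction n generalizing a with
  | zero => exact absurd rfl h
  | succ n ih =>
    have hpow : 2 ^ (n + 1) = 2 ^ n + 2 ^ n := by rw [pow_succ]; omega
    have hpos : 0 < 2 ^ n := by positivity
    by_cases hroot : g a n = 0
    · by_cases hleft : dyadicSum g n a = 0
      · obtain ⟨b, m, hb, hg⟩ := ih (a := a + 2 ^ n) (by simpa [dyadicSum, hroot, hleft] using h)
        exact ⟨b, m, by omega, hg⟩
      · obtain ⟨b, m, hb, hg⟩ := ih hleft
        exact ⟨b, m, by omega, hg⟩
    · exact ⟨a, n, le_rfl, hroot⟩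

theorem dyadicSum_two_pow {R : Type*} [CommSemiring R] (n a : ℕ) :
    dyadicSum (fun _ m => (2 : R) ^ (m + 1)) n a = n * 2 ^ n := by
  induction n generalizing a with
  | zero => simp [dyadicSum]
  | succ n ih => simp only [dyadicSum, ih]; push_cast; ring

end DyadicSum

section Haar

def blockSum (f : ℕ → ℝ) (a L : ℕ) : ℝ := ∑ j ∈ Finset.Ico a (a + L), f j

theorem blockSum_add (f : ℕ → ℝ) (a L L' : ℕ) :
    blockSum f a (L + L') = blockSum f a L + blockSum f (a + L) L' := by
  rw [blockSum, blockSum, blockSum, ← add_assoc,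
    Finset.sum_Ico_consecutive _ (by omega) (by omega)]

/-- The squared coefficient of `f` against the normalised Haar wavelet of `[b, b + 2^(m+1))`. -/
def haarCoeffSq (f : ℕ → ℝ) (b m : ℕ) : ℝ :=
  (blockSum f (b + 2 ^ m) (2 ^ m) - blockSum f b (2 ^ m)) ^ 2 / 2 ^ (m + 1)

theorem blockSum_sq_eq_add_dyadicSum_haarCoeffSq (f : ℕ → ℝ) (n a : ℕ) :
    blockSum (fun j => f j ^ 2) a (2 ^ n) =
      blockSum f a (2 ^ n) ^ 2 / 2 ^ n + dyadicSum (haarCoeffSq f) n a := by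
  induction n generalizing a with
  | zero => simp [blockSum, dyadicSum]
  | succ n ih =>
    have hpow : 2 ^ (n + 1) = 2 ^ n + 2 ^ n := by omega
    rw [hpow, blockSum_add, blockSum_add, ih, ih, dyadicSum, haarCoeffSq]
    field_simp
    ring

theorem dyadicSum_haarCoeffSq_le {f : ℕ → ℝ} (hf : ∀ j, f j ∈ Set.Icc 0 1) (n a : ℕ) :
    dyadicSum (haarCoeffSq f) n a ≤ 2 ^ n / 4 := by
  have hsq : blockSum (fun j => f j ^ 2) a (2 ^ n) ≤ blockSum f a (2 ^ n) :=
    Finset.sum_le_sum fun j _ => by nlinarith [(hf j).1, (hf j).2]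
  have hpos : (0 : ℝ) < 2 ^ n := by positivity
  have hvar : blockSum f a (2 ^ n) - blockSum f a (2 ^ n) ^ 2 / 2 ^ n ≤ 2 ^ n / 4 := by
    rw [sub_le_iff_le_add, ← sub_le_iff_le_add', le_div_iff₀ hpos]
    nlinarith [sq_nonneg (2 ^ n - 2 * blockSum f a (2 ^ n))]
  linarith [blockSum_sq_eq_add_dyadicSum_haarCoeffSq f n a]

end Haar

section Forecasting

def onesIndicator (x : ℕ → Bool) (j : ℕ) : ℝ := if x j = true then 1 else 0

theorem onesIndicator_mem_Icc (x : ℕ → Bool) (j : ℕ) : onesIndicator x j ∈ Set.Icc 0 1 := by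
  unfold onesIndicator; split_ifs <;> norm_num

theorem onesFrac_eq_blockSum (x : ℕ → Bool) (t N : ℕ) :
    onesFrac x t N = blockSum (onesIndicator x) t N / N := by
  rw [onesFrac, blockSum, Finset.natCast_card_filter]
  rfl

theorem not_epsSuccessful_iff {ε : ℝ} {x : ℕ → Bool} {f : ℕ × ℚ × ℕ} :
    ¬ epsSuccessful ε x f ↔ ε ≤ |onesFrac x f.1 f.2.2 - f.2.1| := by
  rw [epsSuccessful, ← not_lt, abs_sub_lt_iff]
  exact not_congr ⟨fun ⟨h₁, h₂⟩ => ⟨by linarith, by linarith⟩,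
    fun ⟨h₁, h₂⟩ => ⟨by linarith, by linarith⟩⟩

def halfForecast (x : ℕ → Bool) (b m : ℕ) : ℕ × ℚ × ℕ :=
  (b + 2 ^ m, (((Finset.Ico b (b + 2 ^ m)).filter (fun j => x j = true)).card : ℚ) / 2 ^ m, 2 ^ m)

theorem halfForecast_congr {x x' : ℕ → Bool} {b m : ℕ} (h : ∀ j < b + 2 ^ m, x j = x' j) :
    halfForecast x b m = halfForecast x' b m := by
  rw [halfForecast, halfForecast, Finset.filter_congr fun j hj => by
    rw [h j (Finset.mem_Ico.mp hj).2]]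

theorem le_haarCoeffSq_of_not_epsSuccessful {ε : ℝ} (hε : 0 ≤ ε) {x : ℕ → Bool} {b m : ℕ}
    (h : ¬ epsSuccessful ε x (halfForecast x b m)) :
    ε ^ 2 * 2 ^ (m + 1) ≤ 4 * haarCoeffSq (onesIndicator x) b m := by
  have hp : ((halfForecast x b m).2.1 : ℝ) = onesFrac x b (2 ^ m) := by
    simp [halfForecast, onesFrac]
  rw [not_epsSuccessful_iff, hp, onesFrac_eq_blockSum, onesFrac_eq_blockSum] at h
  simp only [halfForecast, Nat.cast_pow, Nat.cast_ofNat, ← sub_div, abs_div,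
    abs_of_pos (pow_pos (two_pos (α := ℝ)) m)] at h
  rw [le_div_iff₀ (by positivity)] at h
  have hsq := pow_le_pow_left₀ (by positivity) h 2
  rw [mul_pow, sq_abs] at hsq
  rw [haarCoeffSq, mul_div_assoc', le_div_iff₀ (by positivity), pow_succ (2 : ℝ) m]
  linarith

/-- Choosing one of the `n` levels uniformly and then one of its `2^(n-m-1)` blocks uniformly gives
the block `[b, b + 2^(m+1))` probability `2^(m+1) / (n 2^n)`. -/
def dyadicWeight (n m : ℕ) : ℝ := 2 ^ (m + 1) / (n * 2 ^ n)

theorem dyadicSum_dyadicWeight {n : ℕ} (hn : 0 < n) :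
    dyadicSum (fun _ m => dyadicWeight n m) n 0 = 1 := by
  simp_rw [dyadicWeight, div_eq_inv_mul]
  rw [dyadicSum_mul_left, dyadicSum_two_pow]
  field_simp

def dyadicProb (n : ℕ) (x : ℕ → Bool) (f : ℕ × ℚ × ℕ) : ℝ :=
  dyadicSum (fun b m => if f = halfForecast x b m then dyadicWeight n m else 0) n 0

theorem dyadicProb_nonneg (n : ℕ) (x : ℕ → Bool) (f : ℕ × ℚ × ℕ) : 0 ≤ dyadicProb n x f :=
  dyadicSum_nonneg (fun b m => by unfold dyadicWeight; split_ifs <;> positivity) n 0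

theorem hasSum_mul_dyadicProb (n : ℕ) (x : ℕ → Bool) (φ : ℕ × ℚ × ℕ → ℝ) :
    HasSum (fun f => φ f * dyadicProb n x f)
      (dyadicSum (fun b m => φ (halfForecast x b m) * dyadicWeight n m) n 0) := by
  have hpoint : (fun f => φ f * dyadicProb n x f) = fun f => dyadicSum (fun b m =>
      if f = halfForecast x b m then φ (halfForecast x b m) * dyadicWeight n m else 0) n 0 := by
    funext f
    rw [dyadicProb, ← dyadicSum_mul_left]
    congr; funext b m
    split_ifs with h <;> simp [h]
  rw [hpoint]
  exact hasSum_dyadicSum (fun b m => hasSum_ite_eq _ _) n 0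

theorem exists_halfForecast_of_dyadicProb_ne_zero {n : ℕ} {x : ℕ → Bool} {f : ℕ × ℚ × ℕ}
    (h : dyadicProb n x f ≠ 0) : ∃ b m, b + 2 ^ (m + 1) ≤ 2 ^ n ∧ f = halfForecast x b m := by
  obtain ⟨b, m, hb, hne⟩ := exists_ne_zero_of_dyadicSum_ne_zero h
  exact ⟨b, m, by simpa using hb, by_contra fun hf => hne (if_neg hf)⟩

theorem dyadicProb_valid {n : ℕ} {x : ℕ → Bool} {t : ℕ} {p : ℚ} {N : ℕ}
    (h : dyadicProb n x (t, p, N) ≠ 0) : 0 ≤ p ∧ p ≤ 1 ∧ 1 ≤ N := by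
  obtain ⟨b, m, -, hf⟩ := exists_halfForecast_of_dyadicProb_ne_zero h
  simp only [halfForecast, Prod.mk.injEq] at hf
  obtain ⟨-, rfl, rfl⟩ := hf
  refine ⟨by positivity, ?_, Nat.one_le_two_pow⟩
  rw [div_le_one (by positivity)]
  exact_mod_cast (Finset.card_filter_le _ _).trans (by simp)

theorem dyadicProb_adapted (n : ℕ) {x x' : ℕ → Bool} {t : ℕ} (p : ℚ) (N : ℕ)
    (h : ∀ j, j < t → x j = x' j) : dyadicProb n x (t, p, N) = dyadicProb n x' (t, p, N) := by
  unfold dyadicProb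
  congr; funext b m
  by_cases ht : t = b + 2 ^ m
  · rw [halfForecast_congr fun j hj => h j (ht ▸ hj)]
  · have hne : ∀ y, (t, p, N) ≠ halfForecast y b m := fun y he => ht (congrArg Prod.fst he)
    rw [if_neg (hne x), if_neg (hne x')]

theorem add_le_two_pow_of_dyadicProb_ne_zero {n : ℕ} {x : ℕ → Bool} {t : ℕ} {p : ℚ} {N : ℕ}
    (h : dyadicProb n x (t, p, N) ≠ 0) : t + N ≤ 2 ^ n := by
  obtain ⟨b, m, hb, hf⟩ := exists_halfForecast_of_dyadicProb_ne_zero h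
  simp only [halfForecast, Prod.mk.injEq] at hf
  obtain ⟨rfl, -, rfl⟩ := hf
  rwa [add_assoc, ← two_mul, ← pow_succ']

def dyadicStrategy (n : ℕ) (hn : 0 < n) : ForecastStrategy where
  prob := dyadicProb n
  nonneg := dyadicProb_nonneg n
  total x := by
    simpa [dyadicSum_dyadicWeight hn] using (hasSum_mul_dyadicProb n x fun _ => 1).tsum_eq
  valid _ _ _ _ := dyadicProb_valid
  adapted _ _ _ := dyadicProb_adapted n

theorem successfulStrategy_dyadicStrategy {n : ℕ} (hn : 0 < n) {δ ε : ℝ} (hε : 0 < ε)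
    (hδ : 1 ≤ ε ^ 2 * n * δ) : successfulStrategy δ ε (dyadicStrategy n hn) := by
  intro x
  set C : ℝ := 4 / (ε ^ 2 * n * 2 ^ n) with hC
  have hsucc : (∑' f, if epsSuccessful ε x f then dyadicProb n x f else 0) =
      dyadicSum (fun b m => (if epsSuccessful ε x (halfForecast x b m) then 1 else 0) *
        dyadicWeight n m) n 0 := by
    rw [tsum_congr fun f => (boole_mul (epsSuccessful ε x f) (dyadicProb n x f)).symm]
    exact (hasSum_mul_dyadicProb n x _).tsum_eq
  have hnode : ∀ b m, dyadicWeight n m - C * haarCoeffSq (onesIndicator x) b m ≤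
      (if epsSuccessful ε x (halfForecast x b m) then 1 else 0) * dyadicWeight n m := by
    intro b m
    have hhaar : 0 ≤ haarCoeffSq (onesIndicator x) b m := by unfold haarCoeffSq; positivity
    split_ifs with hs
    · nlinarith [show 0 ≤ C by positivity]
    · rw [zero_mul, sub_nonpos, hC, dyadicWeight, div_mul_eq_mul_div, div_le_div_iff₀
        (by positivity) (by positivity)]
      nlinarith [le_haarCoeffSq_of_not_epsSuccessful hε.le hs,
        show (0 : ℝ) < n * 2 ^ n by positivity]
  calc 1 - δ ≤ 1 - C * (2 ^ n / 4) := by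
        have hCn : C * (2 ^ n / 4) = 1 / (ε ^ 2 * n) := by rw [hC]; field_simp
        rw [hCn, sub_le_sub_iff_left, div_le_iff₀ (by positivity)]
        linarith
    _ ≤ 1 - C * dyadicSum (haarCoeffSq (onesIndicator x)) n 0 := by
        gcongr
        exact dyadicSum_haarCoeffSq_le (onesIndicator_mem_Icc x) n 0
    _ = dyadicSum (fun b m => dyadicWeight n m - C * haarCoeffSq (onesIndicator x) b m) n 0 := by
        rw [dyadicSum_sub, dyadicSum_mul_left, dyadicSum_dyadicWeight hn]
    _ ≤ _ := dyadicSum_mono hnode n 0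
    _ = _ := hsucc.symm

end Forecasting

end

theorem density_prediction (δ ε : ℝ) (hδ : 0 < δ) (hε : 0 < ε) :
    ∃ S : ForecastStrategy, successfulStrategy δ ε S ∧
      ∀ x : ℕ → Bool, ∀ (t : ℕ) (p : ℚ) (N : ℕ),
        S.prob x (t, p, N) ≠ 0 → t + N ≤ 2 ^ (⌈4 / (δ * ε ^ 2)⌉₊) := by
  set n := ⌈4 / (δ * ε ^ 2)⌉₊
  have hn : 0 < n := Nat.ceil_pos.mpr (by positivity)
  have hδn : 1 ≤ ε ^ 2 * n * δ := by
    have hceil := Nat.le_ceil (4 / (δ * ε ^ 2))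
    rw [div_le_iff₀ (by positivity)] at hceil
    nlinarith
  exact ⟨dyadicStrategy n hn, successfulStrategy_dyadicStrategy hn hε hδn,
    fun _ _ _ _ => add_le_two_pow_of_dyadicProb_ne_zero⟩
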